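/- arXiv:2409.12283 — 2 statements merged into one kernel-verified Lean document; each statement's English description precedes it below -/
import Mathlib

section
/- Let T be a locally finite tree and let A be a set of vertices of T. If A is k-ended in T with k ≥ 3, then there exists a single vertex v of T whose removal leaves at least 3 components of T each meeting A infinitely. -/
open SimpleGraph

/-- A connected component `C` of the graph induced on `s` is `A`-infinite if it contains
infinitely many vertices of `A`. -/
def AInfiniteComp {V : Type*} (G : SimpleGraph V) (A : Set V) (s : Set V)
    (C : (G.induce s).ConnectedComponent) : Prop :=
  {v : s | (G.induce s).connectedComponentMk v = C ∧ (v : V) ∈ A}.Infinite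

section TreeAux
variable {V : Type*} (T : SimpleGraph V) (hT : T.IsTree)

/-- The unique path between two vertices of a tree. -/
noncomputable def pathBtw (x y : V) : T.Walk x y :=
  ((hT.existsUnique_path x y).exists).choose

lemma pathBtw_isPath (x y : V) : (pathBtw T hT x y).IsPath :=
  ((hT.existsUnique_path x y).exists).choose_spec

lemma pathBtw_unique {x y : V} (p : T.Walk x y) (hp : p.IsPath) :
    p = pathBtw T hT x y := by
  obtain ⟨q, hq, huniq⟩ := hT.existsUnique_path x y
  rw [huniq p hp, huniq (pathBtw T hT x y) (pathBtw_isPath T hT x y)]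

lemma pathBtw_support_subset {x y : V} (w : T.Walk x y) :
    ∀ z ∈ (pathBtw T hT x y).support, z ∈ w.support := by
  classical
  intro z hz
  have h := pathBtw_unique T hT w.bypass w.bypass_isPath
  rw [← h] at hz
  exact w.support_bypass_subset hz

lemma pathBtw_symm (x y : V) :
    pathBtw T hT y x = (pathBtw T hT x y).reverse :=
  (pathBtw_unique T hT _ (pathBtw_isPath T hT x y).reverse).symm

lemma mem_pathBtw_symm {x y z : V} (h : z ∈ (pathBtw T hT x y).support) :
    z ∈ (pathBtw T hT y x).support := by
  rw [pathBtw_symm, SimpleGraph.Walk.support_reverse, List.mem_reverse]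
  exact h

/-- Monotonicity of reachability in induced subgraphs. -/
lemma reach_mono {s t : Set V} (hst : s ⊆ t) :
    ∀ {a b : s} (_ : (T.induce s).Walk a b),
      (T.induce t).Reachable ⟨a.1, hst a.2⟩ ⟨b.1, hst b.2⟩ := by
  intro a b p
  induction p with
  | nil => exact Reachable.refl _
  | @cons a c b hadj p ih =>
    refine Reachable.trans (Adj.reachable ?_) ih
    simp only [comap_adj, Function.Embedding.coe_subtype] at hadj ⊢
    exact hadj

/-- A reachability in an induced subgraph gives a walk in the ambient graph
staying inside the inducing set. -/
lemma reach_walk {s : Set V} {a b : s} (h : (T.induce s).Reachable a b) :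
    ∃ w : T.Walk a.1 b.1, ∀ z ∈ w.support, z ∈ s := by
  obtain ⟨p⟩ := h
  induction p with
  | nil => exact ⟨SimpleGraph.Walk.nil, by simp [Subtype.coe_prop]⟩
  | @cons a c b hadj p ih =>
    obtain ⟨w, hw⟩ := ih
    simp only [comap_adj, Function.Embedding.coe_subtype] at hadj
    refine ⟨SimpleGraph.Walk.cons hadj w, ?_⟩
    intro z hz
    rw [SimpleGraph.Walk.support_cons, List.mem_cons] at hz
    rcases hz with rfl | hz
    · exact a.2
    · exact hw z hz

/-- Separation: if `v` lies on the unique path between `x` and `y` and differs from both,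
then `x` and `y` are not reachable in `T - v`. -/
lemma sep {v x y : V} (hx : x ∈ ({v}ᶜ : Set V)) (hy : y ∈ ({v}ᶜ : Set V))
    (hv : v ∈ (pathBtw T hT x y).support) :
    ¬ (T.induce ({v}ᶜ : Set V)).Reachable ⟨x, hx⟩ ⟨y, hy⟩ := by
  intro h
  obtain ⟨w, hw⟩ := reach_walk T h
  exact (hw v (pathBtw_support_subset T hT w v hv)) rfl

/-- Exit lemma: a walk from outside `H` into `H` passes the boundary. -/
lemma exit {H : Set V} : ∀ {x y : V} (_ : T.Walk x y) (hx : x ∉ H) (_ : y ∈ H),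
    ∃ (u h : V) (hu : u ∉ H), h ∈ H ∧ T.Adj h u ∧
      (T.induce (Hᶜ : Set V)).Reachable ⟨x, hx⟩ ⟨u, hu⟩ := by
  intro x y p
  induction p with
  | nil => intro hx hy; exact absurd hy hx
  | @cons a c b hadj p ih =>
    intro hx hy
    by_cases hc : c ∈ H
    · exact ⟨a, c, hx, hc, hadj.symm, Reachable.refl _⟩
    · obtain ⟨u, h, hu, hh, hhu, hr⟩ := ih hc hy
      refine ⟨u, h, hu, hh, hhu, Reachable.trans (Adj.reachable ?_) hr⟩
      simp only [comap_adj, Function.Embedding.coe_subtype]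
      exact hadj

/-- Median: for any three vertices of a tree there is a vertex lying on all three
pairwise paths. -/
lemma median (a b c : V) :
    ∃ v : V, v ∈ (pathBtw T hT a b).support ∧ v ∈ (pathBtw T hT a c).support ∧
      v ∈ (pathBtw T hT b c).support := by
  classical
  set p := pathBtw T hT a c with hpdef
  set q := pathBtw T hT b c with hqdef
  have hex : ∃ n, ∃ x, ∃ hx : x ∈ p.support, x ∈ q.support ∧ (p.takeUntil x hx).length = n :=
    ⟨(p.takeUntil c p.end_mem_support).length, c, p.end_mem_support, q.end_mem_support, rfl⟩
  obtain ⟨v, hvp, hvq, hlen⟩ := Nat.find_spec hex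
  have hmin : ∀ x (hx : x ∈ p.support), x ∈ q.support →
      Nat.find hex ≤ (p.takeUntil x hx).length :=
    fun x hx hxq => Nat.find_min' hex ⟨x, hx, hxq, rfl⟩
  set p1 := p.takeUntil v hvp with hp1def
  set q1 := q.takeUntil v hvq with hq1def
  have hp1 : p1.IsPath := (pathBtw_isPath T hT a c).takeUntil hvp
  have hq1 : q1.IsPath := (pathBtw_isPath T hT b c).takeUntil hvq
  have hkey : ∀ x, x ∈ p1.support → x ∈ q1.support → x = v := by
    intro x hxp1 hxq1
    have hxp : x ∈ p.support := p.support_takeUntil_subset hvp hxp1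
    have hxq : x ∈ q.support := q.support_takeUntil_subset hvq hxq1
    have h1 : p.takeUntil x hxp = pathBtw T hT a x :=
      pathBtw_unique T hT _ ((pathBtw_isPath T hT a c).takeUntil hxp)
    have h2 : p1.takeUntil x hxp1 = pathBtw T hT a x :=
      pathBtw_unique T hT _ (hp1.takeUntil hxp1)
    have hle : (p1.takeUntil x hxp1).length ≤ p1.length := Walk.length_takeUntil_le p1 hxp1
    have hge : Nat.find hex ≤ (p.takeUntil x hxp).length := hmin x hxp hxq
    rw [h1, ← h2] at hge
    have hspec := p1.take_spec hxp1
    have hadd : (p1.takeUntil x hxp1).length + (p1.dropUntil x hxp1).length = p1.length := by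
      rw [← Walk.length_append, hspec]
    have hzero : (p1.dropUntil x hxp1).length = 0 := by omega
    exact Walk.eq_of_length_eq_zero hzero
  set r := p1.append q1.reverse with hrdef
  have hrpath : r.IsPath := by
    rw [Walk.isPath_def, hrdef, Walk.support_append]
    have hq1r := q1.reverse.support_eq_cons
    have hq1nodup := hq1.reverse.support_nodup
    rw [hq1r, List.nodup_cons] at hq1nodup
    refine List.Nodup.append hp1.support_nodup hq1nodup.2 ?_
    intro x hx1 hx2
    have hxq1 : x ∈ q1.support := by
      have hxr : x ∈ q1.reverse.support := List.mem_of_mem_tail hx2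
      rwa [Walk.support_reverse, List.mem_reverse] at hxr
    have hxv := hkey x hx1 hxq1
    subst hxv
    exact hq1nodup.1 hx2
  have hvr : v ∈ r.support := by
    rw [hrdef, Walk.mem_support_append_iff]
    exact Or.inl p1.end_mem_support
  have hr' : r = pathBtw T hT a b := pathBtw_unique T hT r hrpath
  rw [hr'] at hvr
  exact ⟨v, hvr, hvp, hvq⟩

end TreeAux

/-- Trifurcation reduction in trees: if in a locally finite tree `T` some finite vertex
set `S` separates `A` into at least `3` `A`-infinite components, then already some single
vertex `v` separates `A` into at least `3` `A`-infinite components. -/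
theorem tree_trifurcation_reduction {V : Type*} (T : SimpleGraph V)
    (hT : T.IsTree) (hlf : T.LocallyFinite) (A : Set V)
    (S : Finset V)
    (f : Fin 3 → (T.induce ((↑S : Set V)ᶜ)).ConnectedComponent)
    (hinj : Function.Injective f)
    (hinf : ∀ i, AInfiniteComp T A ((↑S : Set V)ᶜ) (f i)) :
    ∃ v : V, ∃ g : Fin 3 → (T.induce (({v} : Set V)ᶜ)).ConnectedComponent,
      Function.Injective g ∧ ∀ i, AInfiniteComp T A (({v} : Set V)ᶜ) (g i) := by
  classical
  have hWinf : ∀ i, ({w : ((↑S : Set V)ᶜ : Set V) |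
      (T.induce ((↑S : Set V)ᶜ)).connectedComponentMk w = f i ∧ (w : V) ∈ A}).Infinite :=
    fun i => hinf i
  -- a base vertex
  obtain ⟨w0s, hw0s⟩ := (hWinf 0).nonempty
  set w0 : V := (w0s : V) with hw0def
  set S' : Finset V := insert w0 S with hS'def
  -- the convex hull of S' in the tree
  set H : Set V := ⋃ s1 ∈ (S' : Set V), ⋃ s2 ∈ (S' : Set V),
    {z | z ∈ (pathBtw T hT s1 s2).support} with hHdef
  have hmemH : ∀ {s1 s2 z : V}, s1 ∈ S' → s2 ∈ S' →
      z ∈ (pathBtw T hT s1 s2).support → z ∈ H := by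
    intro s1 s2 z h1 h2 hz
    rw [hHdef]
    exact Set.mem_biUnion h1 (Set.mem_biUnion h2 hz)
  have hHfin : H.Finite :=
    Set.Finite.biUnion S'.finite_toSet (fun s1 _ =>
      Set.Finite.biUnion S'.finite_toSet (fun s2 _ => (pathBtw T hT s1 s2).support.finite_toSet))
  have hSsubH : (↑S : Set V) ⊆ H := fun s hs =>
    hmemH (Finset.mem_insert_of_mem hs) (Finset.mem_insert_of_mem hs)
      (Walk.start_mem_support _)
  have hw0H : w0 ∈ H :=
    hmemH (Finset.mem_insert_self _ _) (Finset.mem_insert_self _ _) (Walk.start_mem_support _)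
  -- convexity of H
  have hconv : ∀ {h1 h2 : V}, h1 ∈ H → h2 ∈ H →
      ∀ z ∈ (pathBtw T hT h1 h2).support, z ∈ H := by
    intro h1 h2 hh1 hh2 z hz
    rw [hHdef] at hh1 hh2
    simp only [Set.mem_iUnion, Set.mem_setOf_eq] at hh1 hh2
    obtain ⟨s1, hs1, s2, hs2, hm1⟩ := hh1
    obtain ⟨s3, hs3, s4, hs4, hm2⟩ := hh2
    set W : T.Walk h1 h2 :=
      ((pathBtw T hT s1 s2).takeUntil h1 hm1).reverse.append
        ((pathBtw T hT s1 s3).append ((pathBtw T hT s3 s4).takeUntil h2 hm2)) with hWdef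
    have hzW := pathBtw_support_subset T hT W z hz
    rw [hWdef, Walk.mem_support_append_iff, Walk.mem_support_append_iff] at hzW
    rcases hzW with hz1 | hz2 | hz3
    · rw [Walk.support_reverse, List.mem_reverse] at hz1
      exact hmemH hs1 hs2 ((pathBtw T hT s1 s2).support_takeUntil_subset hm1 hz1)
    · exact hmemH hs1 hs3 hz2
    · exact hmemH hs3 hs4 ((pathBtw T hT s3 s4).support_takeUntil_subset hm2 hz3)
  have hHcSc : (Hᶜ : Set V) ⊆ ((↑S : Set V)ᶜ) := fun z hz hzS => hz (hSsubH hzS)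
  -- the infinite trace sets at the level of V
  set B : Fin 3 → Set V := fun i => Subtype.val '' {w : ((↑S : Set V)ᶜ : Set V) |
      (T.induce ((↑S : Set V)ᶜ)).connectedComponentMk w = f i ∧ (w : V) ∈ A} with hBdef
  have hBinf : ∀ i, (B i \ H).Infinite := fun i =>
    Set.Infinite.diff ((hWinf i).image (Subtype.val_injective.injOn)) hHfin
  have hBprop : ∀ {i x}, x ∈ B i → x ∈ A ∧ ∃ hxs : x ∈ ((↑S : Set V)ᶜ),
      (T.induce ((↑S : Set V)ᶜ)).connectedComponentMk ⟨x, hxs⟩ = f i := by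
    intro i x hx
    obtain ⟨w, ⟨hw1, hw2⟩, rfl⟩ := hx
    exact ⟨hw2, w.2, by rwa [Subtype.coe_eta]⟩
  -- finitely many components of T - H
  have hattach : ∀ κ : (T.induce (Hᶜ : Set V)).ConnectedComponent,
      ∃ pr : V × V, (pr ∈ ⋃ x ∈ H, (fun u => (x, u)) '' T.neighborSet x) ∧
        ∃ hu : pr.2 ∉ H, (T.induce (Hᶜ : Set V)).connectedComponentMk ⟨pr.2, hu⟩ = κ := by
    intro κ
    obtain ⟨z, hz⟩ := κ.exists_rep
    obtain ⟨u, h, hu, hh, hhu, hr⟩ := exit T (pathBtw T hT z.1 w0) z.2 hw0H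
    refine ⟨(h, u), Set.mem_biUnion hh ⟨u, hhu, rfl⟩, hu, ?_⟩
    have hz' : (T.induce (Hᶜ : Set V)).connectedComponentMk ⟨z.1, z.2⟩ = κ := by
      rw [Subtype.coe_eta]; exact hz
    rw [← hz']
    exact ConnectedComponent.sound hr.symm
  haveI hCfin : Finite ((T.induce (Hᶜ : Set V)).ConnectedComponent) := by
    choose pr hprN hu hκ using hattach
    have hNfin : (⋃ x ∈ H, (fun u => (x, u)) '' T.neighborSet x).Finite :=
      hHfin.biUnion (fun x _ => Set.Finite.image _ (by haveI := hlf x; exact (T.neighborSet x).toFinite))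
    haveI := hNfin.to_subtype
    refine Finite.of_injective (fun κ => (⟨pr κ, hprN κ⟩ : ↥(⋃ x ∈ H, (fun u => (x, u)) '' T.neighborSet x))) ?_
    intro κ1 κ2 he
    have hpe : pr κ1 = pr κ2 := congrArg Subtype.val he
    rw [← hκ κ1, ← hκ κ2]
    exact congrArg _ (Subtype.ext (congrArg Prod.snd hpe))
  -- pigeonhole: a component of T - H carrying infinitely many A-points of each trace
  have hEex : ∀ i, ∃ κ : (T.induce (Hᶜ : Set V)).ConnectedComponent,
      {x : V | ∃ (_ : x ∈ B i) (hxH : x ∉ H),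
        (T.induce (Hᶜ : Set V)).connectedComponentMk ⟨x, hxH⟩ = κ}.Infinite := by
    intro i
    haveI : Infinite ↥(B i \ H) := (hBinf i).to_subtype
    obtain ⟨κ, hκ⟩ := Finite.exists_infinite_fiber
      (fun x : ↥(B i \ H) => (T.induce (Hᶜ : Set V)).connectedComponentMk ⟨x.1, x.2.2⟩)
    refine ⟨κ, Set.Infinite.mono ?_ ((Set.infinite_coe_iff.mp hκ).image (Subtype.val_injective.injOn))⟩
    rintro x ⟨y, hy, rfl⟩
    exact ⟨y.2.1, y.2.2, hy⟩
  choose κ hκinf using hEex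
  have hxex : ∀ i, ∃ x, ∃ (_ : x ∈ B i) (hxH : x ∉ H),
      (T.induce (Hᶜ : Set V)).connectedComponentMk ⟨x, hxH⟩ = κ i :=
    fun i => (hκinf i).nonempty
  choose x hxB hxH hxκ using hxex
  -- the κ i are pairwise distinct
  have hκne : ∀ i j, i ≠ j → κ i ≠ κ j := by
    intro i j hij he
    have hr : (T.induce (Hᶜ : Set V)).Reachable ⟨x i, hxH i⟩ ⟨x j, hxH j⟩ :=
      ConnectedComponent.exact (by rw [hxκ i, he, ← hxκ j])
    obtain ⟨pw⟩ := hr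
    have hr2 := reach_mono T hHcSc pw
    obtain ⟨hAi, hsi, hfi⟩ := hBprop (hxB i)
    obtain ⟨hAj, hsj, hfj⟩ := hBprop (hxB j)
    apply hij
    apply hinj
    rw [← hfi, ← hfj]
    exact ConnectedComponent.sound hr2
  -- attachments of the three components
  have hatt : ∀ i, ∃ (u h : V) (hu : u ∉ H), h ∈ H ∧ T.Adj h u ∧
      (T.induce (Hᶜ : Set V)).connectedComponentMk ⟨u, hu⟩ = κ i := by
    intro i
    obtain ⟨u, h, hu, hh, hhu, hr⟩ := exit T (pathBtw T hT (x i) w0) (hxH i) hw0H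
    exact ⟨u, h, hu, hh, hhu, by rw [← hxκ i]; exact ConnectedComponent.sound hr.symm⟩
  choose u h hu hhH hadj hκu using hatt
  -- the median vertex
  obtain ⟨v, hv01, hv02, hv12⟩ := median T hT (h 0) (h 1) (h 2)
  have hvH : v ∈ H := hconv (hhH 0) (hhH 1) v hv01
  have huvc : ∀ i, u i ∈ ({v} : Set V)ᶜ := by
    intro i hvi
    rw [Set.mem_singleton_iff] at hvi
    exact hu i (by rw [hvi]; exact hvH)
  have hHcvc : (Hᶜ : Set V) ⊆ (({v} : Set V)ᶜ) := by
    intro z hz hzv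
    rw [Set.mem_singleton_iff] at hzv
    exact hz (by rw [hzv]; exact hvH)
  have hune : ∀ i j, i ≠ j → u i ≠ u j := by
    intro i j hij he
    exact hκne i j hij (by rw [← hκu i, ← hκu j]; exact congrArg _ (Subtype.ext he))
  -- the separation key
  have key : ∀ i j, i ≠ j → v ∈ (pathBtw T hT (h i) (h j)).support →
      (T.induce (({v} : Set V)ᶜ)).connectedComponentMk ⟨u i, huvc i⟩ ≠
        (T.induce (({v} : Set V)ᶜ)).connectedComponentMk ⟨u j, huvc j⟩ := by
    intro i j hij hvij he
    have hreach := ConnectedComponent.exact he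
    set P := pathBtw T hT (h i) (h j) with hPdef
    have hPH : ∀ z ∈ P.support, z ∈ H := hconv (hhH i) (hhH j)
    set wk : T.Walk (u i) (u j) :=
      Walk.cons (hadj i).symm (P.append (Walk.cons (hadj j) Walk.nil)) with hwkdef
    have hwkpath : wk.IsPath := by
      rw [Walk.isPath_def, hwkdef, Walk.support_cons, Walk.support_append,
        Walk.support_cons, Walk.support_nil, List.nodup_cons]
      constructor
      · intro hmem
        rcases List.mem_append.mp hmem with hm | hm
        · exact hu i (hPH _ hm)
        · rw [List.tail_cons, List.mem_singleton] at hm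
          exact hune i j hij hm
      · refine List.Nodup.append (pathBtw_isPath T hT _ _).support_nodup ?_ ?_
        · rw [List.tail_cons]; exact List.nodup_singleton _
        · intro z hz1 hz2
          rw [List.tail_cons, List.mem_singleton] at hz2
          subst hz2
          exact hu j (hPH _ hz1)
    have hvwk : v ∈ wk.support := by
      rw [hwkdef, Walk.support_cons]
      exact List.mem_cons_of_mem _ ((Walk.mem_support_append_iff _ _).mpr (Or.inl hvij))
    rw [pathBtw_unique T hT wk hwkpath] at hvwk
    exact sep T hT (huvc i) (huvc j) hvwk hreach
  refine ⟨v, fun i => (T.induce (({v} : Set V)ᶜ)).connectedComponentMk ⟨u i, huvc i⟩, ?_, ?_⟩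
  · -- injectivity
    intro i j he
    by_contra hij
    have hv10 := mem_pathBtw_symm T hT hv01
    have hv20 := mem_pathBtw_symm T hT hv02
    have hv21 := mem_pathBtw_symm T hT hv12
    fin_cases i <;> fin_cases j
    · exact hij rfl
    · exact key 0 1 (by decide) hv01 he
    · exact key 0 2 (by decide) hv02 he
    · exact key 1 0 (by decide) hv10 he
    · exact hij rfl
    · exact key 1 2 (by decide) hv12 he
    · exact key 2 0 (by decide) hv20 he
    · exact key 2 1 (by decide) hv21 he
    · exact hij rfl
  · -- A-infiniteness
    intro i
    show ({w : (({v} : Set V)ᶜ : Set V) |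
      (T.induce (({v} : Set V)ᶜ)).connectedComponentMk w =
        (T.induce (({v} : Set V)ᶜ)).connectedComponentMk ⟨u i, huvc i⟩ ∧ (w : V) ∈ A}).Infinite
    apply Set.Infinite.of_image (f := Subtype.val)
    refine Set.Infinite.mono ?_ (hκinf i)
    rintro z ⟨hzB, hzH, hzκ⟩
    obtain ⟨hzA, hzs, hzf⟩ := hBprop hzB
    have hzvc : z ∈ ({v} : Set V)ᶜ := by
      intro hzv
      rw [Set.mem_singleton_iff] at hzv
      exact hzH (by rw [hzv]; exact hvH)
    refine ⟨⟨z, hzvc⟩, ⟨?_, hzA⟩, rfl⟩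
    have hr : (T.induce (Hᶜ : Set V)).Reachable ⟨z, hzH⟩ ⟨u i, hu i⟩ :=
      ConnectedComponent.exact (by rw [hzκ, ← hκu i])
    obtain ⟨pw⟩ := hr
    exact ConnectedComponent.sound (reach_mono T hHcvc pw)
end

section
/- Let ν be the law of a doubly-infinite sequence (Z_i)_{i∈ℤ} in a countable group H given by a two-sided random walk with i.i.d. symmetric increments with step distribution μ (Z_0 = o, Z_{n+1} = Z_n ξ_{n+1} with ξ i.i.d. ~ μ and μ(g) = μ(g⁻¹)). Then the time-shift S((z_i)_i) = (z_{i+1})_i preserves the measure ν on the σ-algebra of events invariant under simultaneous left-translation of the whole trajectory by elements of H. -/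
/-!
A translation-invariant event sees a trajectory `z` only through its increments
`(z i)⁻¹ * z (i + 1)`: it is the preimage of the measurable set of increment sequences whose walk
started at `1` lies in the event. Shifting `z` shifts its increments, and the increments are
i.i.d., so their law is shift invariant: both laws take the same product values on cylinders.
-/

open MeasureTheory

/-- The time shift on doubly-infinite trajectories. -/
def timeShift {H : Type*} (z : ℤ → H) : ℤ → H := fun i => z (i + 1)

lemma measurable_timeShift {α : Type*} [MeasurableSpace α] :
    Measurable (timeShift : (ℤ → α) → ℤ → α) :=
  measurable_pi_lambda _ fun i => measurable_pi_apply (i + 1)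

section PointCylinders

variable {ι α : Type*} [MeasurableSpace α] [MeasurableSingletonClass α] [Countable α]

lemma measurableSet_pointCylinder (F : Finset ι) (b : ι → α) :
    MeasurableSet {w : ι → α | ∀ i ∈ F, w i = b i} := by
  simp only [Set.ofPred_forall]
  exact .biInter F.countable_toSet fun i _ =>
    measurableSet_eq_fun (measurable_pi_apply i) measurable_const

lemma MeasureTheory.Measure.ext_of_measure_pointCylinder {ρ ρ' : Measure (ι → α)} [IsFiniteMeasure ρ]
    (h : ∀ (F : Finset ι) (b : ι → α),
      ρ {w | ∀ i ∈ F, w i = b i} = ρ' {w | ∀ i ∈ F, w i = b i}) :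
    ρ = ρ' := by
  refine IsProjectiveLimit.unique (P := fun I => ρ.map I.restrict) (fun _ => rfl) fun I => ?_
  refine (Measure.ext_of_singleton fun g => ?_).symm
  have hmeas := Finset.measurable_restrict (X := fun _ : ι => α) I
  rw [Measure.map_apply hmeas (measurableSet_singleton g),
    Measure.map_apply hmeas (measurableSet_singleton g)]
  rcases ((I.restrict (π := fun _ => α)) ⁻¹' {g}).eq_empty_or_nonempty with hempty | ⟨w₀, hw₀⟩
  · simp only [hempty, measure_empty]
  · have hcyl : (I.restrict (π := fun _ => α)) ⁻¹' {g} = {w | ∀ i ∈ I, w i = w₀ i} := by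
      ext w
      simp only [Set.mem_preimage, Set.mem_singleton_iff] at hw₀ ⊢
      simp [← hw₀, funext_iff]
    rw [hcyl, h]

lemma map_timeShift_eq_self_of_measure_pointCylinder_eq_prod {ρ : Measure (ℤ → α)}
    [IsFiniteMeasure ρ] (p : α → ENNReal)
    (hρ : ∀ (F : Finset ℤ) (b : ℤ → α), ρ {w | ∀ i ∈ F, w i = b i} = ∏ i ∈ F, p (b i)) :
    ρ.map timeShift = ρ := by
  refine Measure.ext_of_measure_pointCylinder fun F b => ?_
  have hshift : timeShift ⁻¹' {w : ℤ → α | ∀ i ∈ F, w i = b i}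
      = {w | ∀ j ∈ F.map (addRightEmbedding 1), w j = b (j - 1)} := by
    ext w
    simp [timeShift]
  rw [Measure.map_apply measurable_timeShift (measurableSet_pointCylinder F b), hshift, hρ, hρ,
    Finset.prod_map]
  simp

end PointCylinders

section Increments

variable {H : Type*} [Group H]

def increments (z : ℤ → H) : ℤ → H := fun i => (z i)⁻¹ * z (i + 1)

def walkOfIncrements (b : ℤ → H) : ℤ → H
  | Int.ofNat 0 => 1
  | Int.ofNat (n + 1) => walkOfIncrements b n * b n
  | Int.negSucc 0 => (b (-1))⁻¹
  | Int.negSucc (n + 1) => walkOfIncrements b (Int.negSucc n) * (b (Int.negSucc (n + 1)))⁻¹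
termination_by i => i.natAbs

@[simp] lemma walkOfIncrements_zero (b : ℤ → H) : walkOfIncrements b 0 = 1 :=
  walkOfIncrements.eq_1 b

lemma walkOfIncrements_add_one (b : ℤ → H) (i : ℤ) :
    walkOfIncrements b (i + 1) = walkOfIncrements b i * b i := by
  rcases i with (n | _ | n)
  · exact walkOfIncrements.eq_2 b n
  · rw [show Int.negSucc 0 + 1 = 0 from rfl, walkOfIncrements.eq_3, walkOfIncrements_zero]
    exact (inv_mul_cancel _).symm
  · rw [show Int.negSucc (n + 1) + 1 = Int.negSucc n from rfl, walkOfIncrements.eq_4,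
      inv_mul_cancel_right]

lemma walkOfIncrements_sub_one (b : ℤ → H) (i : ℤ) :
    walkOfIncrements b (i - 1) = walkOfIncrements b i * (b (i - 1))⁻¹ :=
  eq_mul_inv_of_mul_eq (by rw [← walkOfIncrements_add_one, sub_add_cancel])

lemma walkOfIncrements_increments (z : ℤ → H) (i : ℤ) :
    walkOfIncrements (increments z) i = (z 0)⁻¹ * z i := by
  induction i using Int.induction_on with
  | zero => simp
  | succ i ih => simp [walkOfIncrements_add_one, ih, increments, mul_assoc]
  | pred i ih => simp [walkOfIncrements_sub_one, ih, increments, mul_assoc]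

lemma preimage_increments_preimage_walkOfIncrements {A : Set (ℤ → H)}
    (hA : ∀ h : H, (fun z : ℤ → H => fun i => h * z i) ⁻¹' A = A) :
    increments ⁻¹' (walkOfIncrements ⁻¹' A) = A := by
  ext z
  have hwalk : walkOfIncrements (increments z) = fun i => (z 0)⁻¹ * z i :=
    funext (walkOfIncrements_increments z)
  rw [Set.mem_preimage, Set.mem_preimage, hwalk]
  exact Set.ext_iff.1 (hA (z 0)⁻¹) z

variable [Countable H] [MeasurableSpace H] [MeasurableSingletonClass H]

lemma measurable_increments : Measurable (increments : (ℤ → H) → ℤ → H) :=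
  measurable_pi_lambda _ fun i => (measurable_pi_apply i).inv.mul (measurable_pi_apply (i + 1))

lemma measurable_walkOfIncrements : Measurable (walkOfIncrements : (ℤ → H) → ℤ → H) := by
  refine measurable_pi_lambda _ fun i => ?_
  induction i using Int.induction_on with
  | zero => simp
  | succ i ih =>
    simp_rw [walkOfIncrements_add_one]
    exact ih.mul (measurable_pi_apply _)
  | pred i ih =>
    simp_rw [walkOfIncrements_sub_one]
    exact ih.mul (measurable_pi_apply _).inv

end Increments

theorem shift_invariant_on_translation_invariant_events_general
    {H : Type*} [Group H] [Countable H]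
    [MeasurableSpace H] [MeasurableSingletonClass H]
    (μ : H → ENNReal)
    (ν : Measure (ℤ → H)) [IsProbabilityMeasure ν]
    (hcyl : ∀ (F : Finset ℤ) (b : ℤ → H),
      ν {z | ∀ i ∈ F, (z i)⁻¹ * z (i + 1) = b i} = ∏ i ∈ F, μ (b i))
    (A : Set (ℤ → H)) (hA : MeasurableSet A)
    (hinv : ∀ h : H, (fun z : ℤ → H => fun i => h * z i) ⁻¹' A = A) :
    ν (timeShift ⁻¹' A) = ν A := by
  obtain ⟨B, hB, rfl⟩ : ∃ B, MeasurableSet B ∧ increments ⁻¹' B = A :=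
    ⟨_, measurable_walkOfIncrements hA, preimage_increments_preimage_walkOfIncrements hinv⟩
  have hlaw : (ν.map increments).map timeShift = ν.map increments :=
    map_timeShift_eq_self_of_measure_pointCylinder_eq_prod μ fun F b => by
      rw [Measure.map_apply measurable_increments (measurableSet_pointCylinder F b)]
      exact hcyl F b
  have hcomm : timeShift ⁻¹' (increments ⁻¹' B) = increments ⁻¹' (timeShift ⁻¹' B) := rfl
  rw [hcomm, ← Measure.map_apply measurable_increments (measurable_timeShift hB),
    ← Measure.map_apply measurable_timeShift hB, hlaw, Measure.map_apply measurable_increments hB]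

/-- Let `ν` be the law of a doubly-infinite random walk on a countable group `H` started
at the identity, with i.i.d. symmetric increments of step distribution `μ` (characterized
by its cylinder probabilities). Then the time shift preserves `ν` on the σ-algebra of
events invariant under simultaneous left translation of the trajectory by elements
of `H`. -/
theorem shift_invariant_on_translation_invariant_events
    {H : Type*} [Group H] [Countable H] [DecidableEq H]
    [MeasurableSpace H] [MeasurableSingletonClass H]
    (μ : H → ENNReal) (hμ : ∑' g, μ g = 1) (hsymm : ∀ g : H, μ g = μ g⁻¹)
    (hsupp : Subgroup.closure {g : H | μ g ≠ 0} = ⊤)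
    (ν : Measure (ℤ → H)) [IsProbabilityMeasure ν]
    (hstart : ν {z | z 0 = 1} = 1)
    (hcyl : ∀ (F : Finset ℤ) (b : ℤ → H),
      ν {z | ∀ i ∈ F, (z i)⁻¹ * z (i + 1) = b i} = ∏ i ∈ F, μ (b i))
    (A : Set (ℤ → H)) (hA : MeasurableSet A)
    (hinv : ∀ h : H, (fun z : ℤ → H => fun i => h * z i) ⁻¹' A = A) :
    ν (timeShift ⁻¹' A) = ν A :=
  shift_invariant_on_translation_invariant_events_general μ ν hcyl A hA hinv
end
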